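/- arXiv:1501.05816 — 2 statements merged into one kernel-verified Lean document; each statement's English description precedes it below -/
import Mathlib

section
/- Let A be a self-adjoint operator on a separable Hilbert space U with orthonormal basis of eigenvectors (e_j) and eigenvalues λ_j < 0 with λ_j → -∞. For τ > 0, n ≥ 1, r ∈ ℝ and 0 < s ≤ 1, the operator (I - τA)^{-n}, viewed as a map from D((-A)^{r-s}) to D((-A)^r), is bounded with operator norm at most s^s (1 - s/n)^{(n-s)} (nτ)^{-s}. In particular it is at most (nτ)^{-s}. -/
/-!
The operator is diagonal, so its norm is `sup_j x_j ^ s / (1 + τ x_j) ^ n` with `x_j = -λ_j > 0`.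
Put `θ = s / n` and `y = τ x`. Weighted AM-GM applied to `y / θ` and `1 / (1 - θ)` gives
`y ^ θ ≤ θ ^ θ (1 - θ) ^ (1 - θ) (1 + y)`, with equality at `y = θ / (1 - θ)`. Raising this to
the power `n` gives the bound `x ^ s ≤ s ^ s (1 - s/n) ^ (n - s) (n τ) ^ (-s) (1 + τ x) ^ n`.
-/

open Real Filter

noncomputable def resolventNormBound (s N τ : ℝ) : ℝ :=
  s ^ s * (1 - s / N) ^ (N - s) * (N * τ) ^ (-s)

/- Also true at `t = 0`, where both sides are `1`; this lets the AM-GM step cover `θ = 0` and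
`θ = 1` without case splits. -/
theorem mul_mul_inv_rpow_self (a t : ℝ) : (t * (a * t⁻¹)) ^ t = a ^ t := by
  rcases eq_or_ne t 0 with rfl | ht
  · simp
  · rw [mul_left_comm, mul_inv_cancel₀ ht, mul_one]

theorem mul_mul_inv_le {a t : ℝ} (ha : 0 ≤ a) : t * (a * t⁻¹) ≤ a := by
  rw [mul_left_comm]
  exact mul_le_of_le_one_right ha mul_inv_le_one

theorem rpow_le_mul_one_add {θ y : ℝ} (hθ0 : 0 ≤ θ) (hθ1 : 0 ≤ 1 - θ) (hy : 0 ≤ y) :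
    y ^ θ ≤ θ ^ θ * (1 - θ) ^ (1 - θ) * (1 + y) := by
  have amgm := geom_mean_le_arith_mean2_weighted hθ0 hθ1 (mul_nonneg hy (inv_nonneg.2 hθ0))
    (mul_nonneg zero_le_one (inv_nonneg.2 hθ1)) (add_sub_cancel θ 1)
  have harith : θ * (y * θ⁻¹) + (1 - θ) * (1 * (1 - θ)⁻¹) ≤ 1 + y := by
    linarith [mul_mul_inv_le (t := θ) hy, mul_mul_inv_le (t := 1 - θ) zero_le_one]
  calc y ^ θ = (θ * (y * θ⁻¹)) ^ θ * ((1 - θ) * (1 * (1 - θ)⁻¹)) ^ (1 - θ) := by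
        rw [mul_mul_inv_rpow_self, mul_mul_inv_rpow_self, one_rpow, mul_one]
    _ = θ ^ θ * (1 - θ) ^ (1 - θ) * ((y * θ⁻¹) ^ θ * (1 * (1 - θ)⁻¹) ^ (1 - θ)) := by
        rw [mul_rpow hθ0 (by positivity), mul_rpow hθ1 (by positivity)]
        ring
    _ ≤ θ ^ θ * (1 - θ) ^ (1 - θ) * (1 + y) :=
        mul_le_mul_of_nonneg_left (amgm.trans harith)
          (mul_nonneg (rpow_nonneg hθ0 _) (rpow_nonneg hθ1 _))

theorem one_sub_div_nonneg_of_le {s N : ℝ} (hs : 0 ≤ s) (hsN : s ≤ N) : 0 ≤ 1 - s / N :=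
  sub_nonneg.2 (div_le_one_of_le₀ hsN (hs.trans hsN))

theorem rpow_le_resolventNormBound_mul {s N τ x : ℝ} (hs : 0 < s) (hsN : s ≤ N) (hτ : 0 < τ)
    (hx : 0 ≤ x) : x ^ s ≤ resolventNormBound s N τ * (1 + τ * x) ^ N := by
  have hN : 0 < N := hs.trans_le hsN
  have hθ0 : 0 ≤ s / N := by positivity
  have hθ1 := one_sub_div_nonneg_of_le hs.le hsN
  have hy : 0 ≤ τ * x := by positivity
  have key := rpow_le_rpow (rpow_nonneg hy _) (rpow_le_mul_one_add hθ0 hθ1 hy) hN.le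
  rw [← rpow_mul hy, div_mul_cancel₀ s hN.ne', mul_rpow hτ.le hx,
    mul_rpow (mul_nonneg (rpow_nonneg hθ0 _) (rpow_nonneg hθ1 _)) (by positivity),
    mul_rpow (rpow_nonneg hθ0 _) (rpow_nonneg hθ1 _), ← rpow_mul hθ0, ← rpow_mul hθ1,
    div_mul_cancel₀ s hN.ne', sub_mul, one_mul, div_mul_cancel₀ s hN.ne',
    div_rpow hs.le hN.le] at key
  rw [resolventNormBound, rpow_neg (by positivity), mul_rpow hN.le hτ.le]
  have hτs : 0 < τ ^ s := rpow_pos_of_pos hτ s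
  have hNs : 0 < N ^ s := rpow_pos_of_pos hN s
  calc x ^ s = τ ^ s * x ^ s / τ ^ s := by field_simp
    _ ≤ s ^ s / N ^ s * (1 - s / N) ^ (N - s) * (1 + τ * x) ^ N / τ ^ s := by gcongr
    _ = _ := by field_simp

theorem rpow_mul_one_sub_mul_rpow_neg_le {s N τ r l : ℝ} (hs : 0 < s) (hsN : s ≤ N)
    (hτ : 0 < τ) (hl : l < 0) :
    (-l) ^ r * (1 - τ * l) ^ (-N) ≤ resolventNormBound s N τ * (-l) ^ (r - s) := by
  have hx : 0 < -l := neg_pos.2 hl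
  have hd : 1 - τ * l = 1 + τ * -l := by ring
  have hd0 : 0 < 1 + τ * -l := by positivity
  have hpow : (-l) ^ r = (-l) ^ (r - s) * (-l) ^ s := by rw [← rpow_add hx, sub_add_cancel]
  rw [hd, rpow_neg hd0.le, ← div_eq_mul_inv, div_le_iff₀ (rpow_pos_of_pos hd0 _), hpow]
  calc (-l) ^ (r - s) * (-l) ^ s
      ≤ (-l) ^ (r - s) * (resolventNormBound s N τ * (1 + τ * -l) ^ N) :=
        mul_le_mul_of_nonneg_left (rpow_le_resolventNormBound_mul hs hsN hτ hx.le)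
          (by positivity)
    _ = _ := by ring

theorem resolventNormBound_nonneg {s N τ : ℝ} (hs : 0 ≤ s) (hsN : s ≤ N) (hτ : 0 ≤ τ) :
    0 ≤ resolventNormBound s N τ :=
  have hN : 0 ≤ N := hs.trans hsN
  mul_nonneg (mul_nonneg (rpow_nonneg hs _) (rpow_nonneg (one_sub_div_nonneg_of_le hs hsN) _))
    (rpow_nonneg (by positivity) _)

theorem resolventNormBound_le {s N τ : ℝ} (hs0 : 0 ≤ s) (hs1 : s ≤ 1) (hsN : s ≤ N)
    (hτ : 0 ≤ τ) : resolventNormBound s N τ ≤ (N * τ) ^ (-s) := by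
  have hN : 0 ≤ N := hs0.trans hsN
  have hθ1 := one_sub_div_nonneg_of_le hs0 hsN
  refine mul_le_of_le_one_left (rpow_nonneg (by positivity) _)
    (mul_le_one₀ (rpow_le_one hs0 hs1 hs0) (rpow_nonneg hθ1 _) (rpow_le_one hθ1 ?_ ?_))
  · linarith [div_nonneg hs0 hN]
  · linarith

theorem tsum_sq_le_of_abs_le {a b : ℕ → ℝ} {C : ℝ} (ha : Summable fun j => a j ^ 2)
    (h : ∀ j, |b j| ≤ C * |a j|) : ∑' j, b j ^ 2 ≤ C ^ 2 * ∑' j, a j ^ 2 := by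
  have hsq : ∀ j, b j ^ 2 ≤ C ^ 2 * a j ^ 2 := fun j => by
    rw [← sq_abs (b j), ← sq_abs (a j), ← mul_pow]
    exact pow_le_pow_left₀ (abs_nonneg _) (h j) 2
  have hCa : Summable fun j => C ^ 2 * a j ^ 2 := ha.mul_left _
  rw [← tsum_mul_left]
  exact (hCa.of_nonneg_of_le (fun j => sq_nonneg _) hsq).tsum_le_tsum hsq hCa

theorem stmt3_general (l : ℕ → ℝ) (τ s r : ℝ) (n : ℕ)
    (hneg : ∀ j, l j < 0)
    (hτ : 0 < τ) (hn : 1 ≤ n) (hs0 : 0 < s) (hs1 : s ≤ 1)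
    (v : ℕ → ℝ) (hv : Summable (fun j => ((-l j) ^ (r - s) * v j) ^ 2)) :
    (∑' j, ((-l j) ^ r * ((1 - τ * l j) ^ (-(n : ℝ)) * v j)) ^ 2)
      ≤ (s ^ s * (1 - s / n) ^ ((n : ℝ) - s) * ((n : ℝ) * τ) ^ (-s)) ^ 2 *
        ∑' j, ((-l j) ^ (r - s) * v j) ^ 2 ∧
    (∑' j, ((-l j) ^ r * ((1 - τ * l j) ^ (-(n : ℝ)) * v j)) ^ 2)
      ≤ (((n : ℝ) * τ) ^ (-s)) ^ 2 * ∑' j, ((-l j) ^ (r - s) * v j) ^ 2 := by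
  have hsn : s ≤ n := hs1.trans (by exact_mod_cast hn)
  have hpointwise (j : ℕ) : |(-l j) ^ r * ((1 - τ * l j) ^ (-(n : ℝ)) * v j)|
      ≤ resolventNormBound s n τ * |(-l j) ^ (r - s) * v j| := by
    have hx : 0 < -l j := neg_pos.2 (hneg j)
    have hd : 0 < 1 - τ * l j := by nlinarith
    rw [abs_mul, abs_mul, abs_mul, abs_of_pos (rpow_pos_of_pos hx _),
      abs_of_pos (rpow_pos_of_pos hd _), abs_of_pos (rpow_pos_of_pos hx _), ← mul_assoc,
      ← mul_assoc]
    exact mul_le_mul_of_nonneg_right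
      (rpow_mul_one_sub_mul_rpow_neg_le hs0 hsn hτ (hneg j)) (abs_nonneg _)
  have hbound := tsum_sq_le_of_abs_le hv hpointwise
  refine ⟨hbound, hbound.trans (mul_le_mul_of_nonneg_right ?_ (tsum_nonneg fun j => sq_nonneg _))⟩
  exact pow_le_pow_left₀ (resolventNormBound_nonneg hs0.le hsn hτ.le)
    (resolventNormBound_le hs0.le hs1 hsn hτ.le) 2

/-- The diagonal operator `(I - τA)^{-n}` from `D((-A)^{r-s})` to `D((-A)^r)` (acting
coefficientwise on the eigenbasis expansion by multiplication with `(1-τλ_j)^{-n}`)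
is bounded with operator norm at most `s^s (1-s/n)^{n-s} (nτ)^{-s}`, in particular
at most `(nτ)^{-s}`, for `0 < s ≤ 1`. -/
theorem stmt3 (l : ℕ → ℝ) (τ s r : ℝ) (n : ℕ)
    (hneg : ∀ j, l j < 0) (hmono : Antitone l)
    (hlim : Tendsto l atTop atBot)
    (hτ : 0 < τ) (hn : 1 ≤ n) (hs0 : 0 < s) (hs1 : s ≤ 1)
    (v : ℕ → ℝ) (hv : Summable (fun j => ((-l j) ^ (r - s) * v j) ^ 2)) :
    (∑' j, ((-l j) ^ r * ((1 - τ * l j) ^ (-(n : ℝ)) * v j)) ^ 2)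
      ≤ (s ^ s * (1 - s / n) ^ ((n : ℝ) - s) * ((n : ℝ) * τ) ^ (-s)) ^ 2 *
        ∑' j, ((-l j) ^ (r - s) * v j) ^ 2 ∧
    (∑' j, ((-l j) ^ r * ((1 - τ * l j) ^ (-(n : ℝ)) * v j)) ^ 2)
      ≤ (((n : ℝ) * τ) ^ (-s)) ^ 2 * ∑' j, ((-l j) ^ (r - s) * v j) ^ 2 :=
  stmt3_general l τ s r n hneg hτ hn hs0 hs1 v hv
end

section
/- Suppose nonnegative numbers C_{j,k} (Lipschitz constants, defined for 1 ≤ j ≤ k ≤ K) satisfy C_{j,j} = 1 and, for some constants a, b ≥ 0, τ > 0 with Kτ = T, the recursive inequality C_{j,k} ≤ 1 + a Σ_{i=0}^{k-j-1} τ C_{j,j+i} + b (Σ_{i=0}^{k-j-1} τ C_{j,j+i}²)^{1/2} for all j ≤ k. Then there is a constant C depending only on a, b, T (not on K, τ, j, k) such that C_{j,k} ≤ C for all 1 ≤ j ≤ k ≤ K. -/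
set_option maxHeartbeats 1000000 in
/-- Abstract form of Case 2 of the uniform Lipschitz bound: the recursive inequality
`C_{j,k} ≤ 1 + a Σ τ C_{j,j+i} + b (Σ τ C_{j,j+i}²)^{1/2}` implies a bound on `C_{j,k}`
depending only on `a`, `b`, `T`. -/
theorem stmt12 (a b T : ℝ) (ha : 0 ≤ a) (hb : 0 ≤ b) (hT : 0 < T) :
    ∃ Cb : ℝ, ∀ (K : ℕ) (τ : ℝ) (C : ℕ → ℕ → ℝ), 0 < τ → (K : ℝ) * τ = T →
      (∀ j k, 0 ≤ C j k) → (∀ j, C j j = 1) →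
      (∀ j k, 1 ≤ j → j ≤ k → k ≤ K →
        C j k ≤ 1 + a * (∑ i ∈ Finset.range (k - j), τ * C j (j + i))
          + b * Real.sqrt (∑ i ∈ Finset.range (k - j), τ * (C j (j + i)) ^ 2)) →
      ∀ j k, 1 ≤ j → j ≤ k → k ≤ K → C j k ≤ Cb := by
  set c := a * Real.sqrt T + b with hc
  set B := 2 * c ^ 2 with hBdef
  have hc0 : 0 ≤ c := by positivity
  have hB0 : 0 ≤ B := by positivity
  refine ⟨Real.sqrt (2 * Real.exp (B * T)), ?_⟩
  intro K τ C hτ hKτ hCnn hCjj hrec j k hj hjk hkK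
  have hBτ : 0 ≤ B * τ := by positivity
  have key : ∀ m, ∀ j, 1 ≤ j → j + m ≤ K → C j (j + m) ^ 2 ≤ 2 * (1 + B * τ) ^ m := by
    intro m
    induction m using Nat.strong_induction_on with
    | _ m ih =>
      intro j hj hjm
      have hrec' := hrec j (j + m) hj (Nat.le_add_right _ _) hjm
      rw [Nat.add_sub_cancel_left] at hrec'
      set P := ∑ i ∈ Finset.range m, τ * C j (j + i) with hPdef
      set Q := ∑ i ∈ Finset.range m, τ * (C j (j + i)) ^ 2 with hQdef
      have hQ0 : 0 ≤ Q := Finset.sum_nonneg fun i _ => by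
        have := hCnn j (j + i); positivity
      have hP0 : 0 ≤ P := Finset.sum_nonneg fun i _ => by
        have := hCnn j (j + i); positivity
      have hCS : P ^ 2 ≤ ((m : ℝ) * τ) * Q := by
        have h := Finset.sum_mul_sq_le_sq_mul_sq (Finset.range m)
          (fun _ => Real.sqrt τ) (fun i => Real.sqrt τ * C j (j + i))
        have e1 : ∀ i, Real.sqrt τ * (Real.sqrt τ * C j (j + i)) = τ * C j (j + i) := by
          intro i
          rw [← mul_assoc, Real.mul_self_sqrt hτ.le]
        have e2 : ∀ i, (Real.sqrt τ * C j (j + i)) ^ 2 = τ * (C j (j + i)) ^ 2 := by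
          intro i
          rw [mul_pow, Real.sq_sqrt hτ.le]
        simp only [e1, e2, Real.sq_sqrt hτ.le, Finset.sum_const, Finset.card_range,
          nsmul_eq_mul] at h
        exact h
      have hmτ : (m : ℝ) * τ ≤ T := by
        rw [← hKτ]
        have hmK : (m : ℝ) ≤ K := Nat.cast_le.mpr (le_trans (Nat.le_add_left _ _) hjm)
        nlinarith
      have hPT : P ≤ Real.sqrt T * Real.sqrt Q := by
        have h1 : P ^ 2 ≤ T * Q := le_trans hCS (by nlinarith)
        calc P = Real.sqrt (P ^ 2) := (Real.sqrt_sq hP0).symm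
          _ ≤ Real.sqrt (T * Q) := Real.sqrt_le_sqrt h1
          _ = Real.sqrt T * Real.sqrt Q := Real.sqrt_mul hT.le _
      have hsQ : (Real.sqrt Q) ^ 2 = Q := Real.sq_sqrt hQ0
      have hCb : C j (j + m) ≤ 1 + c * Real.sqrt Q := by
        have hq := Real.sqrt_nonneg Q
        nlinarith [mul_le_mul_of_nonneg_left hPT ha]
      have hsq2 : C j (j + m) ^ 2 ≤ 2 + B * Q := by
        have hq := Real.sqrt_nonneg Q
        have h := mul_self_le_mul_self (hCnn j (j + m)) hCb
        have hs := sq_nonneg (1 - c * Real.sqrt Q)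
        rw [hBdef]
        nlinarith [hsQ]
      have hQbound : Q ≤ ∑ i ∈ Finset.range m, τ * (2 * (1 + B * τ) ^ i) := by
        apply Finset.sum_le_sum
        intro i hi
        have hi' := Finset.mem_range.mp hi
        have h := ih i hi' j hj (by omega)
        exact mul_le_mul_of_nonneg_left h hτ.le
      have hsum : ∑ i ∈ Finset.range m, τ * (2 * (1 + B * τ) ^ i)
          = 2 * τ * ∑ i ∈ Finset.range m, (1 + B * τ) ^ i := by
        rw [Finset.mul_sum]
        exact Finset.sum_congr rfl fun i _ => by ring
      have hg := geom_sum_mul (1 + B * τ) m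
      have hgeom : B * ∑ i ∈ Finset.range m, τ * (2 * (1 + B * τ) ^ i)
          = 2 * ((1 + B * τ) ^ m - 1) := by
        rw [hsum]
        have : (1 + B * τ - 1) = B * τ := by ring
        rw [this] at hg
        calc B * (2 * τ * ∑ i ∈ Finset.range m, (1 + B * τ) ^ i)
            = 2 * ((∑ i ∈ Finset.range m, (1 + B * τ) ^ i) * (B * τ)) := by ring
          _ = 2 * ((1 + B * τ) ^ m - 1) := by rw [hg]
      have hBQ : B * Q ≤ 2 * ((1 + B * τ) ^ m - 1) := by
        rw [← hgeom]
        exact mul_le_mul_of_nonneg_left hQbound hB0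
      linarith
  have hm := key (k - j) j hj (by omega)
  rw [Nat.add_sub_cancel' hjk] at hm
  have h1 : (1 + B * τ) ≤ Real.exp (B * τ) := by
    have := Real.add_one_le_exp (B * τ); linarith
  have h2 : (1 + B * τ) ^ (k - j) ≤ Real.exp (B * τ) ^ (k - j) :=
    pow_le_pow_left₀ (by linarith) h1 _
  have h3 : Real.exp (B * τ) ^ (k - j) = Real.exp (((k - j : ℕ) : ℝ) * (B * τ)) :=
    (Real.exp_nat_mul _ _).symm
  have h4 : ((k - j : ℕ) : ℝ) * (B * τ) ≤ B * T := by
    rw [← hKτ]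
    have : ((k - j : ℕ) : ℝ) ≤ K := Nat.cast_le.mpr (by omega)
    nlinarith
  have h5 : C j k ^ 2 ≤ 2 * Real.exp (B * T) := by
    have := Real.exp_le_exp.mpr h4
    rw [h3] at h2
    linarith
  calc C j k = Real.sqrt (C j k ^ 2) := (Real.sqrt_sq (hCnn j k)).symm
    _ ≤ Real.sqrt (2 * Real.exp (B * T)) := Real.sqrt_le_sqrt h5
end
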